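/- Let k be a field, A a finite-dimensional k-algebra, M a right A-module of k-dimension n given by the structure map f: A → M_n(k), and I_f the ideal of the free algebra k⟨(v_{ij})_{i,j=1}^n⟩ generated by the entries of V·f(a) − f(a)·V for all a ∈ A (V = (v_{ij})). If λ_{ij} ∈ k are scalars such that Σ_{i,j} λ_{ij} m_{ij} = 0 for every matrix (m_{ij}) ∈ M_n(k) that commutes with all f(a), a ∈ A (i.e. every A-endomorphism of M ≅ kⁿ), then Σ_{i,j} λ_{ij} v_{ij} ∈ I_f. -/

import Mathlib

universe u

/-- The ideal `I_f ⊆ k⟨(v_{ij})⟩`: the two-sided ideal of the free algebra on the `n²`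
generators `v_{ij}` generated by the entries of the commutators `V·f(a) − f(a)·V`, `a : A`. -/
def commutatorIdeal {k A : Type u} [Field k] [Ring A] [Algebra k A] {n : ℕ}
    (f : A →ₐ[k] Matrix (Fin n) (Fin n) k) :
    TwoSidedIdeal (FreeAlgebra k (Fin n × Fin n)) :=
  TwoSidedIdeal.span
    {x | ∃ (a : A) (i j : Fin n),
      x = ∑ l, FreeAlgebra.ι k (i, l) * algebraMap k (FreeAlgebra k (Fin n × Fin n)) (f a l j)
        - ∑ l, algebraMap k (FreeAlgebra k (Fin n × Fin n)) (f a i l) * FreeAlgebra.ι k (l, j)}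

/-!
The functional `Λ = Σ λ_ij m_ij` on the finite-dimensional space `M_n(k)` vanishes on the common
kernel of the functionals `m ↦ (m f(a) - f(a) m)_ij`, so it is a `k`-linear combination of them.
Reading a functional `φ` as the linear form `Σ φ(E_pq) v_pq` is `k`-linear, sends `Λ` to
`Σ λ_ij v_ij` and each of those functionals to a generator of `I_f`.
-/

open Matrix Submodule

namespace Matrix

variable {k n : Type*} [Field k] [Fintype n]

def commutatorEntry (a : Matrix n n k) (i j : n) : Module.Dual k (Matrix n n k) :=
  entryLinearMap k k i j ∘ₗ (LinearMap.mulRight k a - LinearMap.mulLeft k a)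

theorem commutatorEntry_apply (a m : Matrix n n k) (i j : n) :
    commutatorEntry a i j m = (m * a - a * m) i j :=
  rfl

theorem commutatorEntry_eq_sum (a : Matrix n n k) (i j : n) :
    commutatorEntry a i j =
      ∑ l, a l j • entryLinearMap k k i l - ∑ l, a i l • entryLinearMap k k l j := by
  ext m
  simp [commutatorEntry_apply, mul_apply, LinearMap.sum_apply, mul_comm]

theorem mem_iInf_ker_commutatorEntry_iff {ι : Type*} (S : ι → Matrix n n k) (m : Matrix n n k) :
    m ∈ ⨅ x : ι × n × n, LinearMap.ker (commutatorEntry (S x.1) x.2.1 x.2.2) ↔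
      ∀ s, m * S s = S s * m := by
  simp [Submodule.mem_iInf, commutatorEntry_apply, sub_eq_zero, ← Matrix.ext_iff]

variable [DecidableEq n]

def dualToFreeAlgebra : Module.Dual k (Matrix n n k) →ₗ[k] FreeAlgebra k (n × n) :=
  ∑ p, ∑ q, (LinearMap.applyₗ (single p q (1 : k))).smulRight (FreeAlgebra.ι k (p, q))

theorem dualToFreeAlgebra_apply (φ : Module.Dual k (Matrix n n k)) :
    dualToFreeAlgebra φ = ∑ p, ∑ q, φ (single p q 1) • FreeAlgebra.ι k (p, q) := by
  simp [dualToFreeAlgebra, LinearMap.sum_apply]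

theorem dualToFreeAlgebra_entryLinearMap (i j : n) :
    dualToFreeAlgebra (entryLinearMap k k i j) = FreeAlgebra.ι k (i, j) := by
  simp [dualToFreeAlgebra_apply, single, ite_and]

theorem dualToFreeAlgebra_commutatorEntry (a : Matrix n n k) (i j : n) :
    dualToFreeAlgebra (commutatorEntry a i j) =
      ∑ l, FreeAlgebra.ι k (i, l) * algebraMap k (FreeAlgebra k (n × n)) (a l j)
        - ∑ l, algebraMap k (FreeAlgebra k (n × n)) (a i l) * FreeAlgebra.ι k (l, j) := by
  simp only [commutatorEntry_eq_sum, map_sub, map_sum, map_smul,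
    dualToFreeAlgebra_entryLinearMap, Algebra.smul_def, Algebra.commutes]

end Matrix

theorem dualToFreeAlgebra_mem_commutatorIdeal {k A : Type u} [Field k] [Ring A] [Algebra k A]
    {n : ℕ} (f : A →ₐ[k] Matrix (Fin n) (Fin n) k) {φ : Module.Dual k (Matrix (Fin n) (Fin n) k)}
    (hφ : φ ∈ span k (Set.range fun x : A × Fin n × Fin n => commutatorEntry (f x.1) x.2.1 x.2.2)) :
    dualToFreeAlgebra φ ∈ commutatorIdeal f := by
  suffices h : (span k _).map dualToFreeAlgebra ≤ (commutatorIdeal f).asIdeal.restrictScalars k from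
    TwoSidedIdeal.mem_asIdeal.1 (h (mem_map_of_mem hφ))
  rw [map_span, span_le]
  rintro _ ⟨_, ⟨⟨a, i, j⟩, rfl⟩, rfl⟩
  exact TwoSidedIdeal.subset_span ⟨a, i, j, dualToFreeAlgebra_commutatorEntry (f a) i j⟩

theorem stmt14_general {k A : Type u} [Field k] [Ring A] [Algebra k A] {n : ℕ}
    (f : A →ₐ[k] Matrix (Fin n) (Fin n) k)
    (lam : Fin n → Fin n → k)
    (hlam : ∀ m : Matrix (Fin n) (Fin n) k,
      (∀ a : A, m * f a = f a * m) → ∑ i, ∑ j, lam i j * m i j = 0) :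
    ∑ i, ∑ j, lam i j • FreeAlgebra.ι k ((i, j) : Fin n × Fin n) ∈ commutatorIdeal f := by
  have hΛ : ∑ i, ∑ j, lam i j • entryLinearMap k k i j ∈
      span k (Set.range fun x : A × Fin n × Fin n => commutatorEntry (f x.1) x.2.1 x.2.2) :=
    FiniteDimensional.mem_span_of_iInf_ker_le_ker fun m hm => by
      simpa [LinearMap.sum_apply] using hlam m ((mem_iInf_ker_commutatorEntry_iff _ m).1 hm)
  simpa [dualToFreeAlgebra_entryLinearMap] using dualToFreeAlgebra_mem_commutatorIdeal f hΛ

/-- **Proposition `PIdealRelations`.** Let `A` be a finite-dimensional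
`k`-algebra and `M = kⁿ` a right `A`-module with structure map `f : A → Mₙ(k)`. If scalars
`λ_{ij}` satisfy `Σ λ_{ij}·m_{ij} = 0` for every matrix `(m_{ij})` commuting with all `f(a)`
(i.e. every `A`-endomorphism of `M`), then `Σ λ_{ij}·v_{ij}` lies in the ideal `I_f` of the
free algebra `k⟨v_{ij}⟩`. -/
theorem stmt14 {k A : Type u} [Field k] [Ring A] [Algebra k A] [FiniteDimensional k A] {n : ℕ}
    (f : A →ₐ[k] Matrix (Fin n) (Fin n) k)
    (lam : Fin n → Fin n → k)
    (hlam : ∀ m : Matrix (Fin n) (Fin n) k,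
      (∀ a : A, m * f a = f a * m) → ∑ i, ∑ j, lam i j * m i j = 0) :
    ∑ i, ∑ j, lam i j • FreeAlgebra.ι k ((i, j) : Fin n × Fin n) ∈ commutatorIdeal f :=
  stmt14_general f lam hlam
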